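/- arXiv:2106.05609 — 7 statements merged into one kernel-verified Lean document; each statement's English description precedes it below -/
import Mathlib

section
/- Let E and F be real normed vector spaces, let Msg : E → F be Lipschitz continuous with constant k₁ and let Upd : E → F → F be Lipschitz continuous with constant k₂ separately in each of its two arguments. Let N be a finite index set and let δ, ε ≥ 0. Suppose h, h̃, h̄ : N → E and a, ã ∈ E satisfy ‖ã − a‖ ≤ δ, ‖h̃ w − h w‖ ≤ δ for all w ∈ N, and ‖h̄ w − h̃ w‖ ≤ ε for all w ∈ N. Then ‖Upd ã (∑_{w ∈ N} Msg (h̄ w)) − Upd a (∑_{w ∈ N} Msg (h w))‖ ≤ δ·k₂ + (δ + ε)·k₁·k₂·|N|. -/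
/-- Lemma 1 (sum aggregation): one-layer output error bound for historical embeddings. -/
theorem gnn_one_layer_error_sum
    {E F : Type*} [NormedAddCommGroup E] [NormedSpace ℝ E]
    [NormedAddCommGroup F] [NormedSpace ℝ F]
    {ι : Type*} (N : Finset ι)
    (Msg : E → F) (Upd : E → F → F) (k₁ k₂ : ℝ) (hk₁ : 0 ≤ k₁) (hk₂ : 0 ≤ k₂)
    (hMsg : ∀ x y : E, ‖Msg x - Msg y‖ ≤ k₁ * ‖x - y‖)
    (hUpd₁ : ∀ (a a' : E) (b : F), ‖Upd a b - Upd a' b‖ ≤ k₂ * ‖a - a'‖)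
    (hUpd₂ : ∀ (a : E) (b b' : F), ‖Upd a b - Upd a b'‖ ≤ k₂ * ‖b - b'‖)
    (δ ε : ℝ) (hδ : 0 ≤ δ) (hε : 0 ≤ ε)
    (h htil hbar : ι → E) (a atil : E)
    (ha : ‖atil - a‖ ≤ δ)
    (hclose : ∀ w ∈ N, ‖htil w - h w‖ ≤ δ)
    (hstale : ∀ w ∈ N, ‖hbar w - htil w‖ ≤ ε) :
    ‖Upd atil (∑ w ∈ N, Msg (hbar w)) - Upd a (∑ w ∈ N, Msg (h w))‖ ≤
      δ * k₂ + (δ + ε) * k₁ * k₂ * N.card := by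
  have hsum : ‖(∑ w ∈ N, Msg (hbar w)) - ∑ w ∈ N, Msg (h w)‖ ≤
      (δ + ε) * k₁ * N.card := by
    rw [← Finset.sum_sub_distrib]
    calc ‖∑ w ∈ N, (Msg (hbar w) - Msg (h w))‖
        ≤ ∑ w ∈ N, ‖Msg (hbar w) - Msg (h w)‖ := norm_sum_le _ _
      _ ≤ ∑ w ∈ N, (δ + ε) * k₁ := by
          apply Finset.sum_le_sum
          intro w hw
          calc ‖Msg (hbar w) - Msg (h w)‖ ≤ k₁ * ‖hbar w - h w‖ := hMsg _ _
            _ ≤ k₁ * (ε + δ) := by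
                apply mul_le_mul_of_nonneg_left _ hk₁
                calc ‖hbar w - h w‖ = ‖(hbar w - htil w) + (htil w - h w)‖ := by
                      rw [sub_add_sub_cancel]
                  _ ≤ ‖hbar w - htil w‖ + ‖htil w - h w‖ := norm_add_le _ _
                  _ ≤ ε + δ := add_le_add (hstale w hw) (hclose w hw)
            _ = (δ + ε) * k₁ := by ring
      _ = (δ + ε) * k₁ * N.card := by
          rw [Finset.sum_const, nsmul_eq_mul]; ring
  calc ‖Upd atil (∑ w ∈ N, Msg (hbar w)) - Upd a (∑ w ∈ N, Msg (h w))‖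
      = ‖(Upd atil (∑ w ∈ N, Msg (hbar w)) - Upd a (∑ w ∈ N, Msg (hbar w)))
          + (Upd a (∑ w ∈ N, Msg (hbar w)) - Upd a (∑ w ∈ N, Msg (h w)))‖ := by
        rw [sub_add_sub_cancel]
    _ ≤ ‖Upd atil (∑ w ∈ N, Msg (hbar w)) - Upd a (∑ w ∈ N, Msg (hbar w))‖
        + ‖Upd a (∑ w ∈ N, Msg (hbar w)) - Upd a (∑ w ∈ N, Msg (h w))‖ :=
        norm_add_le _ _
    _ ≤ k₂ * ‖atil - a‖ + k₂ * ‖(∑ w ∈ N, Msg (hbar w)) - ∑ w ∈ N, Msg (h w)‖ :=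
        add_le_add (hUpd₁ _ _ _) (hUpd₂ _ _ _)
    _ ≤ k₂ * δ + k₂ * ((δ + ε) * k₁ * N.card) :=
        add_le_add (mul_le_mul_of_nonneg_left ha hk₂)
          (mul_le_mul_of_nonneg_left hsum hk₂)
    _ = δ * k₂ + (δ + ε) * k₁ * k₂ * N.card := by ring
end

section
/- Let E and F be real normed vector spaces, let Msg : E → F be Lipschitz continuous with constant k₁ and let Upd : E → F → F be Lipschitz continuous with constant k₂ separately in each of its two arguments. Let N be a nonempty finite index set and let δ, ε ≥ 0. Suppose h, h̃, h̄ : N → E and a, ã ∈ E satisfy ‖ã − a‖ ≤ δ, ‖h̃ w − h w‖ ≤ δ for all w ∈ N, and ‖h̄ w − h̃ w‖ ≤ ε for all w ∈ N. Then for mean aggregation ‖Upd ã ((1/|N|)·∑_{w ∈ N} Msg (h̄ w)) − Upd a ((1/|N|)·∑_{w ∈ N} Msg (h w))‖ ≤ δ·k₂ + (δ + ε)·k₁·k₂, i.e., the bound of Lemma 1 with the factor |N| replaced by 1. -/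
/-- Lemma 1, mean-aggregation variant: the one-layer output error bound without
the factor `|N|`. -/
theorem gnn_one_layer_error_mean
    {E F : Type*} [NormedAddCommGroup E] [NormedSpace ℝ E]
    [NormedAddCommGroup F] [NormedSpace ℝ F]
    {ι : Type*} (N : Finset ι) (hN : N.Nonempty)
    (Msg : E → F) (Upd : E → F → F) (k₁ k₂ : ℝ) (hk₁ : 0 ≤ k₁) (hk₂ : 0 ≤ k₂)
    (hMsg : ∀ x y : E, ‖Msg x - Msg y‖ ≤ k₁ * ‖x - y‖)
    (hUpd₁ : ∀ (a a' : E) (b : F), ‖Upd a b - Upd a' b‖ ≤ k₂ * ‖a - a'‖)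
    (hUpd₂ : ∀ (a : E) (b b' : F), ‖Upd a b - Upd a b'‖ ≤ k₂ * ‖b - b'‖)
    (δ ε : ℝ) (hδ : 0 ≤ δ) (hε : 0 ≤ ε)
    (h htil hbar : ι → E) (a atil : E)
    (ha : ‖atil - a‖ ≤ δ)
    (hclose : ∀ w ∈ N, ‖htil w - h w‖ ≤ δ)
    (hstale : ∀ w ∈ N, ‖hbar w - htil w‖ ≤ ε) :
    ‖Upd atil (((N.card : ℝ))⁻¹ • ∑ w ∈ N, Msg (hbar w)) -
        Upd a (((N.card : ℝ))⁻¹ • ∑ w ∈ N, Msg (h w))‖ ≤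
      δ * k₂ + (δ + ε) * k₁ * k₂ := by
  set c : ℝ := (N.card : ℝ)
  have hc : 0 < c := by simp only [c]; exact_mod_cast Finset.card_pos.mpr hN
  set B := c⁻¹ • ∑ w ∈ N, Msg (hbar w)
  set B' := c⁻¹ • ∑ w ∈ N, Msg (h w)
  have hBB' : ‖B - B'‖ ≤ (δ + ε) * k₁ := by
    have : B - B' = c⁻¹ • ∑ w ∈ N, (Msg (hbar w) - Msg (h w)) := by
      simp [B, B', Finset.sum_sub_distrib, smul_sub]
    rw [this, norm_smul]
    have hsum : ‖∑ w ∈ N, (Msg (hbar w) - Msg (h w))‖ ≤ c * ((δ + ε) * k₁) := by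
      calc ‖∑ w ∈ N, (Msg (hbar w) - Msg (h w))‖
          ≤ ∑ w ∈ N, ‖Msg (hbar w) - Msg (h w)‖ := norm_sum_le _ _
        _ ≤ ∑ _w ∈ N, (δ + ε) * k₁ := by
            refine Finset.sum_le_sum fun w hw => ?_
            calc ‖Msg (hbar w) - Msg (h w)‖ ≤ k₁ * ‖hbar w - h w‖ := hMsg _ _
              _ ≤ k₁ * (ε + δ) := by
                  refine mul_le_mul_of_nonneg_left ?_ hk₁
                  calc ‖hbar w - h w‖ = ‖(hbar w - htil w) + (htil w - h w)‖ := by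
                        rw [sub_add_sub_cancel]
                    _ ≤ ‖hbar w - htil w‖ + ‖htil w - h w‖ := norm_add_le _ _
                    _ ≤ ε + δ := add_le_add (hstale w hw) (hclose w hw)
              _ = (δ + ε) * k₁ := by ring
        _ = c * ((δ + ε) * k₁) := by simp [mul_comm, c]
    have : ‖(c⁻¹ : ℝ)‖ = c⁻¹ := by
      rw [Real.norm_eq_abs, abs_of_pos (inv_pos.mpr hc)]
    rw [this]
    calc c⁻¹ * ‖∑ w ∈ N, (Msg (hbar w) - Msg (h w))‖
        ≤ c⁻¹ * (c * ((δ + ε) * k₁)) := by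
          exact mul_le_mul_of_nonneg_left hsum (le_of_lt (inv_pos.mpr hc))
      _ = (δ + ε) * k₁ := by field_simp
  calc ‖Upd atil B - Upd a B'‖
      ≤ ‖Upd atil B - Upd a B‖ + ‖Upd a B - Upd a B'‖ := by
        have := norm_add_le (Upd atil B - Upd a B) (Upd a B - Upd a B')
        simpa using this
    _ ≤ k₂ * ‖atil - a‖ + k₂ * ‖B - B'‖ := add_le_add (hUpd₁ _ _ _) (hUpd₂ _ _ _)
    _ ≤ k₂ * δ + k₂ * ((δ + ε) * k₁) :=
        add_le_add (mul_le_mul_of_nonneg_left ha hk₂)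
          (mul_le_mul_of_nonneg_left hBB' hk₂)
    _ = δ * k₂ + (δ + ε) * k₁ * k₂ := by ring
end

section
/- Let E and F be real normed vector spaces, let Msg : E → F be Lipschitz continuous with constant k₁, let Upd : E → F → F be Lipschitz continuous with constant k₂ separately in each of its two arguments, let N be a finite index set, and let Agg : (N → F) → F satisfy ‖Agg m − Agg m'‖ ≤ k_A · max_{w ∈ N} ‖m w − m' w‖ for all m, m' : N → F (Agg is Lipschitz with constant k_A with respect to the sup metric). Let δ, ε ≥ 0 and suppose h, h̃, h̄ : N → E and a, ã ∈ E satisfy ‖ã − a‖ ≤ δ, ‖h̃ w − h w‖ ≤ δ for all w ∈ N, and ‖h̄ w − h̃ w‖ ≤ ε for all w ∈ N. Then ‖Upd ã (Agg (fun w ↦ Msg (h̄ w))) − Upd a (Agg (fun w ↦ Msg (h w)))‖ ≤ δ·k₂ + (δ + ε)·k₁·k₂·k_A. -/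
/-- Lemma 1, general aggregation: if the aggregation function `Agg` is
`k_A`-Lipschitz with respect to the sup metric over coordinatewise inputs,
the one-layer output error is bounded by `δ k₂ + (δ + ε) k₁ k₂ k_A`. -/
theorem gnn_one_layer_error_general_agg
    {E F : Type*} [NormedAddCommGroup E] [NormedSpace ℝ E]
    [NormedAddCommGroup F] [NormedSpace ℝ F]
    {ι : Type*} (N : Finset ι) (hN : N.Nonempty)
    (Msg : E → F) (Upd : E → F → F) (Agg : (ι → F) → F)
    (k₁ k₂ kA : ℝ) (hk₁ : 0 ≤ k₁) (hk₂ : 0 ≤ k₂) (hkA : 0 ≤ kA)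
    (hMsg : ∀ x y : E, ‖Msg x - Msg y‖ ≤ k₁ * ‖x - y‖)
    (hUpd₁ : ∀ (a a' : E) (b : F), ‖Upd a b - Upd a' b‖ ≤ k₂ * ‖a - a'‖)
    (hUpd₂ : ∀ (a : E) (b b' : F), ‖Upd a b - Upd a b'‖ ≤ k₂ * ‖b - b'‖)
    (hAgg : ∀ m m' : ι → F, ‖Agg m - Agg m'‖ ≤ kA * N.sup' hN fun w => ‖m w - m' w‖)
    (δ ε : ℝ) (hδ : 0 ≤ δ) (hε : 0 ≤ ε)
    (h htil hbar : ι → E) (a atil : E)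
    (ha : ‖atil - a‖ ≤ δ)
    (hclose : ∀ w ∈ N, ‖htil w - h w‖ ≤ δ)
    (hstale : ∀ w ∈ N, ‖hbar w - htil w‖ ≤ ε) :
    ‖Upd atil (Agg fun w => Msg (hbar w)) - Upd a (Agg fun w => Msg (h w))‖ ≤
      δ * k₂ + (δ + ε) * k₁ * k₂ * kA := by
  set B := Agg fun w => Msg (hbar w)
  set B' := Agg fun w => Msg (h w)
  have hsup : (N.sup' hN fun w => ‖Msg (hbar w) - Msg (h w)‖) ≤ k₁ * (ε + δ) := by
    apply Finset.sup'_le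
    intro w hw
    calc ‖Msg (hbar w) - Msg (h w)‖ ≤ k₁ * ‖hbar w - h w‖ := hMsg _ _
      _ ≤ k₁ * (ε + δ) := by
        apply mul_le_mul_of_nonneg_left _ hk₁
        calc ‖hbar w - h w‖ = ‖(hbar w - htil w) + (htil w - h w)‖ := by rw [sub_add_sub_cancel]
          _ ≤ ‖hbar w - htil w‖ + ‖htil w - h w‖ := norm_add_le _ _
          _ ≤ ε + δ := add_le_add (hstale w hw) (hclose w hw)
  have hB : ‖B - B'‖ ≤ kA * (k₁ * (ε + δ)) :=
    (hAgg _ _).trans (mul_le_mul_of_nonneg_left hsup hkA)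
  calc ‖Upd atil B - Upd a B'‖
      = ‖(Upd atil B - Upd a B) + (Upd a B - Upd a B')‖ := by rw [sub_add_sub_cancel]
    _ ≤ ‖Upd atil B - Upd a B‖ + ‖Upd a B - Upd a B'‖ := norm_add_le _ _
    _ ≤ k₂ * ‖atil - a‖ + k₂ * ‖B - B'‖ := add_le_add (hUpd₁ _ _ _) (hUpd₂ _ _ _)
    _ ≤ k₂ * δ + k₂ * (kA * (k₁ * (ε + δ))) :=
        add_le_add (mul_le_mul_of_nonneg_left ha hk₂) (mul_le_mul_of_nonneg_left hB hk₂)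
    _ = δ * k₂ + (δ + ε) * k₁ * k₂ * kA := by ring
end

section
/- Let E be a real normed vector space and equip E × E with the norm ‖(a,b)‖ = max(‖a‖,‖b‖). Let V be a finite set of nodes with neighborhood map N : V → Finset V and maximum degree D := max_{v ∈ V} |N(v)|, and assume k₁·D ≥ 1. For each layer ℓ = 1, …, L let Msg_ℓ : E → E be Lipschitz with constant k₁ and Upd_ℓ : E × E → E be Lipschitz with constant k₂ (with respect to the max product norm). Define exact embeddings by h⁰_v given and h^ℓ_v = Upd_ℓ(h^{ℓ−1}_v, ∑_{w ∈ N(v)} Msg_ℓ(h^{ℓ−1}_w)). Define approximate embeddings by h̃⁰_v = h⁰_v and h̃^ℓ_v = Upd_ℓ(h̃^{ℓ−1}_v, ∑_{w ∈ N(v)} Msg_ℓ(h̄^{ℓ−1}_w)), where the historical embeddings h̄^ℓ : V → E satisfy ‖h̄^ℓ_v − h̃^ℓ_v‖ ≤ ε_ℓ for all v ∈ V and all ℓ = 1, …, L−1. Then for every v ∈ V, ‖h̃^L_v − h^L_v‖ ≤ ∑_{ℓ=1}^{L−1} ε_ℓ · (k₁·k₂·D)^{L−ℓ}. -/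
/-- Theorem 1: the final output error of an `L`-layered GNN trained with
historical embeddings is bounded by `∑_{ℓ=1}^{L-1} ε_ℓ (k₁ k₂ D)^{L-ℓ}`,
where `D` is the maximum degree and `ε_ℓ` bounds the staleness of the
layer-`ℓ` historical embeddings. -/
theorem gnn_multi_layer_error
    {E : Type*} [NormedAddCommGroup E] [NormedSpace ℝ E]
    {V : Type*} [Fintype V] (Nb : V → Finset V)
    (L : ℕ) (hL : 1 ≤ L)
    (k₁ k₂ : ℝ) (hk₁ : 0 ≤ k₁) (hk₂ : 0 ≤ k₂)
    (D : ℕ) (hD : D = Finset.univ.sup fun v => (Nb v).card)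
    (hkD : 1 ≤ k₁ * D)
    (Msg : ℕ → E → E) (Upd : ℕ → E × E → E)
    (hMsg : ∀ ℓ, ∀ x y : E, ‖Msg ℓ x - Msg ℓ y‖ ≤ k₁ * ‖x - y‖)
    (hUpd : ∀ ℓ, ∀ p q : E × E,
      ‖Upd ℓ p - Upd ℓ q‖ ≤ k₂ * max ‖p.1 - q.1‖ ‖p.2 - q.2‖)
    (h htil hbar : ℕ → V → E)
    (hrec : ∀ ℓ v, h (ℓ + 1) v =
      Upd (ℓ + 1) (h ℓ v, ∑ w ∈ Nb v, Msg (ℓ + 1) (h ℓ w)))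
    (htrec : ∀ ℓ v, htil (ℓ + 1) v =
      Upd (ℓ + 1) (htil ℓ v, ∑ w ∈ Nb v, Msg (ℓ + 1) (hbar ℓ w)))
    (h0 : ∀ v, htil 0 v = h 0 v)
    (hbar0 : ∀ v, hbar 0 v = h 0 v)
    (ε : ℕ → ℝ)
    (hstale : ∀ ℓ, 1 ≤ ℓ → ℓ ≤ L - 1 → ∀ v, ‖hbar ℓ v - htil ℓ v‖ ≤ ε ℓ) :
    ∀ v, ‖htil L v - h L v‖ ≤
      ∑ ℓ ∈ Finset.Icc 1 (L - 1), ε ℓ * (k₁ * k₂ * D) ^ (L - ℓ) := by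
  intro v
  set C : ℝ := k₁ * k₂ * D with hC
  have hC0 : 0 ≤ C := by positivity
  have hεnn : ∀ j, 1 ≤ j → j ≤ L - 1 → 0 ≤ ε j := fun j h1 h2 =>
    (norm_nonneg _).trans (hstale j h1 h2 v)
  have hcard : ∀ w : V, ((Nb w).card : ℝ) ≤ D := by
    intro w
    exact_mod_cast Nat.cast_le.mpr (hD ▸ Finset.le_sup (Finset.mem_univ w))
  set S : ℕ → ℝ := fun ℓ => ∑ j ∈ Finset.Icc 1 (ℓ - 1), ε j * C ^ (ℓ - j) with hS
  have hSnn : ∀ ℓ, ℓ ≤ L → 0 ≤ S ℓ := by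
    intro ℓ hℓ
    apply Finset.sum_nonneg
    intro j hj
    simp only [Finset.mem_Icc] at hj
    exact mul_nonneg (hεnn j hj.1 (hj.2.trans (Nat.sub_le_sub_right hℓ 1)))
      (pow_nonneg hC0 _)
  have key : ∀ ℓ, ℓ ≤ L → ∀ u, ‖htil ℓ u - h ℓ u‖ ≤ S ℓ := by
    intro ℓ
    induction ℓ with
    | zero => intro _ u; simp [h0, hS]
    | succ ℓ ih =>
      intro hℓL u
      have hℓL' : ℓ ≤ L := Nat.le_of_succ_le hℓL
      have ihL := ih hℓL'
      rw [htrec, hrec]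
      refine (hUpd (ℓ+1) _ _).trans ?_
      rcases Nat.eq_zero_or_pos ℓ with rfl | hℓ1
      · have : S 1 = 0 := by simp [hS]
        rw [this]
        have h1 : htil 0 u - h 0 u = 0 := by rw [h0]; abel
        have h2 : (∑ w ∈ Nb u, Msg 1 (hbar 0 w)) - ∑ w ∈ Nb u, Msg 1 (h 0 w) = 0 := by
          simp only [hbar0]; abel
        simp [h1, h2]
      · have hℓLe : ℓ ≤ L - 1 := Nat.le_sub_one_of_lt hℓL
        have hεℓ : 0 ≤ ε ℓ := hεnn ℓ hℓ1 hℓLe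
        have hSℓ : 0 ≤ S ℓ := hSnn ℓ hℓL'
        -- bound second component
        have hsum : ‖(∑ w ∈ Nb u, Msg (ℓ+1) (hbar ℓ w)) - ∑ w ∈ Nb u, Msg (ℓ+1) (h ℓ w)‖
            ≤ k₁ * D * (ε ℓ + S ℓ) := by
          rw [← Finset.sum_sub_distrib]
          calc ‖∑ w ∈ Nb u, (Msg (ℓ+1) (hbar ℓ w) - Msg (ℓ+1) (h ℓ w))‖
              ≤ ∑ w ∈ Nb u, ‖Msg (ℓ+1) (hbar ℓ w) - Msg (ℓ+1) (h ℓ w)‖ :=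
                norm_sum_le _ _
            _ ≤ ∑ w ∈ Nb u, k₁ * (ε ℓ + S ℓ) := by
                apply Finset.sum_le_sum
                intro w _
                refine (hMsg (ℓ+1) _ _).trans (mul_le_mul_of_nonneg_left ?_ hk₁)
                calc ‖hbar ℓ w - h ℓ w‖
                    ≤ ‖hbar ℓ w - htil ℓ w‖ + ‖htil ℓ w - h ℓ w‖ :=
                      norm_sub_le_norm_sub_add_norm_sub _ _ _
                  _ ≤ ε ℓ + S ℓ :=
                      add_le_add (hstale ℓ hℓ1 hℓLe w) (ihL w)
            _ = (Nb u).card * (k₁ * (ε ℓ + S ℓ)) := by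
                rw [Finset.sum_const, nsmul_eq_mul]
            _ ≤ D * (k₁ * (ε ℓ + S ℓ)) := by
                apply mul_le_mul_of_nonneg_right (hcard u)
                positivity
            _ = k₁ * D * (ε ℓ + S ℓ) := by ring
        have hfst : ‖htil ℓ u - h ℓ u‖ ≤ k₁ * D * (ε ℓ + S ℓ) := by
          calc ‖htil ℓ u - h ℓ u‖ ≤ S ℓ := ihL u
            _ = 1 * S ℓ := (one_mul _).symm
            _ ≤ k₁ * D * (ε ℓ + S ℓ) := by
                apply mul_le_mul hkD (le_add_of_nonneg_left hεℓ) hSℓ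
                positivity
        have hmax : max ‖htil ℓ u - h ℓ u‖
            ‖(∑ w ∈ Nb u, Msg (ℓ+1) (hbar ℓ w)) - ∑ w ∈ Nb u, Msg (ℓ+1) (h ℓ w)‖
            ≤ k₁ * D * (ε ℓ + S ℓ) := max_le hfst hsum
        have hstep : k₂ * (k₁ * D * (ε ℓ + S ℓ)) = C * ε ℓ + C * S ℓ := by
          rw [hC]; ring
        have hSsucc : S (ℓ + 1) = C * ε ℓ + C * S ℓ := by
          obtain ⟨m, rfl⟩ : ∃ m, ℓ = m + 1 := ⟨ℓ - 1, by omega⟩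
          set ℓ := m + 1 with hℓdef
          rw [hS]
          simp only [Nat.add_sub_cancel]
          rw [Finset.sum_Icc_succ_top (by omega : 1 ≤ ℓ)]
          have h2 : ∀ j ∈ Finset.Icc 1 m, ε j * C ^ (ℓ + 1 - j)
              = C * (ε j * C ^ (ℓ - j)) := by
            intro j hj
            simp only [Finset.mem_Icc] at hj
            have h4 : ℓ + 1 - j = (ℓ - j) + 1 := by omega
            rw [h4, pow_succ]; ring
          rw [Finset.sum_congr rfl h2, ← Finset.mul_sum]
          have h3 : ℓ + 1 - (m + 1) = 1 := by omega
          rw [h3, pow_one]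
          have h4 : Finset.Icc 1 (ℓ - 1) = Finset.Icc 1 m := rfl
          rw [h4]
          ring
        calc k₂ * max _ _ ≤ k₂ * (k₁ * D * (ε ℓ + S ℓ)) :=
              mul_le_mul_of_nonneg_left hmax hk₂
          _ = C * ε ℓ + C * S ℓ := hstep
          _ = S (ℓ + 1) := hSsucc.symm
  exact key L le_rfl v
end

section
/- Let E be a real normed vector space, let V be a finite set of nodes with neighborhood map N : V → Finset V, and for ℓ = 1, 2 let Msg_ℓ : E → E be Lipschitz with constant k₁ and Upd_ℓ : E → E → E be Lipschitz with constant k₂ separately in each argument. Define exact embeddings h⁰_v given, h^ℓ_v = Upd_ℓ(h^{ℓ−1}_v, ∑_{w∈N(v)} Msg_ℓ(h^{ℓ−1}_w)) for ℓ = 1, 2, and approximate embeddings h̃⁰_v = h⁰_v, h̃^ℓ_v = Upd_ℓ(h̃^{ℓ−1}_v, ∑_{w∈N(v)} Msg_ℓ(h̄^{ℓ−1}_w)), where the historical embeddings satisfy h̄⁰_w = h⁰_w for all w and ‖h̄¹_w − h̃¹_w‖ ≤ ε₁ for all w ∈ V. Then h̃¹_v = h¹_v for all v ∈ V, and ‖h̃²_v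 − h²_v‖ ≤ ε₁·k₁·k₂·|N(v)| for every v ∈ V. -/
/-- The base case in the proof of Theorem 1: for a two-layer GNN with exact
inputs at layer 0, the first-layer approximate output is exact, and the
second-layer output error is bounded by `ε₁ k₁ k₂ |N(v)|`. -/
theorem gnn_two_layer_base_case
    {E : Type*} [NormedAddCommGroup E] [NormedSpace ℝ E]
    {V : Type*} [Fintype V] (Nb : V → Finset V)
    (k₁ k₂ : ℝ) (hk₁ : 0 ≤ k₁) (hk₂ : 0 ≤ k₂)
    (Msg₁ Msg₂ : E → E) (Upd₁ Upd₂ : E → E → E)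
    (hMsg₁ : ∀ x y : E, ‖Msg₁ x - Msg₁ y‖ ≤ k₁ * ‖x - y‖)
    (hMsg₂ : ∀ x y : E, ‖Msg₂ x - Msg₂ y‖ ≤ k₁ * ‖x - y‖)
    (hUpd₁a : ∀ (a a' b : E), ‖Upd₁ a b - Upd₁ a' b‖ ≤ k₂ * ‖a - a'‖)
    (hUpd₁b : ∀ (a b b' : E), ‖Upd₁ a b - Upd₁ a b'‖ ≤ k₂ * ‖b - b'‖)
    (hUpd₂a : ∀ (a a' b : E), ‖Upd₂ a b - Upd₂ a' b‖ ≤ k₂ * ‖a - a'‖)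
    (hUpd₂b : ∀ (a b b' : E), ‖Upd₂ a b - Upd₂ a b'‖ ≤ k₂ * ‖b - b'‖)
    (h0 h1 h2 htil1 htil2 hbar0 hbar1 : V → E)
    (hrec1 : ∀ v, h1 v = Upd₁ (h0 v) (∑ w ∈ Nb v, Msg₁ (h0 w)))
    (hrec2 : ∀ v, h2 v = Upd₂ (h1 v) (∑ w ∈ Nb v, Msg₂ (h1 w)))
    (htrec1 : ∀ v, htil1 v = Upd₁ (h0 v) (∑ w ∈ Nb v, Msg₁ (hbar0 w)))
    (htrec2 : ∀ v, htil2 v = Upd₂ (htil1 v) (∑ w ∈ Nb v, Msg₂ (hbar1 w)))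
    (hbar0eq : ∀ w, hbar0 w = h0 w)
    (ε₁ : ℝ)
    (hstale1 : ∀ w, ‖hbar1 w - htil1 w‖ ≤ ε₁) :
    (∀ v, htil1 v = h1 v) ∧
      ∀ v, ‖htil2 v - h2 v‖ ≤ ε₁ * k₁ * k₂ * (Nb v).card := by
  have heq1 : ∀ v, htil1 v = h1 v := by
    intro v
    rw [htrec1, hrec1]
    congr 1
    exact Finset.sum_congr rfl fun w _ => by rw [hbar0eq]
  refine ⟨heq1, fun v => ?_⟩
  rw [htrec2, hrec2, heq1]
  calc ‖Upd₂ (h1 v) (∑ w ∈ Nb v, Msg₂ (hbar1 w)) -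
        Upd₂ (h1 v) (∑ w ∈ Nb v, Msg₂ (h1 w))‖
      ≤ k₂ * ‖(∑ w ∈ Nb v, Msg₂ (hbar1 w)) - ∑ w ∈ Nb v, Msg₂ (h1 w)‖ :=
        hUpd₂b _ _ _
    _ ≤ k₂ * ∑ w ∈ Nb v, ‖Msg₂ (hbar1 w) - Msg₂ (h1 w)‖ := by
        gcongr
        rw [← Finset.sum_sub_distrib]
        exact norm_sum_le _ _
    _ ≤ k₂ * ∑ w ∈ Nb v, k₁ * ε₁ := by
        gcongr with w hw
        calc ‖Msg₂ (hbar1 w) - Msg₂ (h1 w)‖ ≤ k₁ * ‖hbar1 w - h1 w‖ :=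
              hMsg₂ _ _
          _ ≤ k₁ * ε₁ := by
              have := hstale1 w
              rw [heq1] at this
              gcongr
    _ = ε₁ * k₁ * k₂ * (Nb v).card := by
        rw [Finset.sum_const]
        push_cast
        ring
end

section
/- There exist a finite simple graph G = (V, E) with neighborhood map N, node features x : V → ℝ, and two distinct nodes v, w ∈ V such that x_v = x_w and the multisets of neighbor features coincide, {{x_u : u ∈ N(v)}} = {{x_u : u ∈ N(w)}}, yet there exist nonempty sampled neighborhoods Ñ(v) ⊆ N(v) and Ñ(w) ⊆ N(w) for which the importance-reweighted aggregations differ: (|N(v)|/|Ñ(v)|)·∑_{u ∈ Ñ(v)} x_u ≠ (|N(w)|/|Ñ(w)|)·∑_{u ∈ Ñ(w)} x_u. -/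
def myNb : Fin 6 → Finset (Fin 6)
  | 0 => {2, 3}
  | 1 => {4, 5}
  | 2 => {0}
  | 3 => {0}
  | 4 => {1}
  | 5 => {1}

noncomputable def myx : Fin 6 → ℝ
  | 3 => 1
  | 5 => 1
  | _ => 0

/-- Proposition 3 (counterexample): there is a finite simple graph (given by a
symmetric, irreflexive neighborhood map `Nb`), node features `x`, and distinct
nodes `v, w` with equal features and equal multisets of neighbor features, yet
nonempty sampled neighborhoods for which the importance-reweighted
aggregations differ. -/
theorem sampled_gnn_not_wl_expressive :
    ∃ (V : Type) (_ : Fintype V) (Nb : V → Finset V) (x : V → ℝ)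
      (v w : V) (Sv Sw : Finset V),
      (∀ a b : V, a ∈ Nb b ↔ b ∈ Nb a) ∧
      (∀ a : V, a ∉ Nb a) ∧
      v ≠ w ∧
      x v = x w ∧
      (Nb v).val.map x = (Nb w).val.map x ∧
      Sv ⊆ Nb v ∧ Sw ⊆ Nb w ∧ Sv.Nonempty ∧ Sw.Nonempty ∧
      (((Nb v).card : ℝ) / (Sv.card : ℝ)) * ∑ u ∈ Sv, x u ≠
        (((Nb w).card : ℝ) / (Sw.card : ℝ)) * ∑ u ∈ Sw, x u := by
  refine ⟨Fin 6, inferInstance, myNb, myx, 0, 1, {2}, {5}, ?_, ?_, ?_, ?_, ?_, ?_, ?_, ?_, ?_, ?_⟩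
  · decide
  · decide
  · decide
  · rfl
  · show ({2, 3} : Finset (Fin 6)).val.map myx = ({4, 5} : Finset (Fin 6)).val.map myx
    simp [myx]
  · decide
  · decide
  · exact ⟨2, by decide⟩
  · exact ⟨5, by decide⟩
  · show ((({2,3} : Finset (Fin 6)).card : ℝ) / (({2} : Finset (Fin 6)).card : ℝ)) * ∑ u ∈ ({2} : Finset (Fin 6)), myx u ≠ _
    have h2 : myx 2 = 0 := rfl
    have h5 : myx 5 = 1 := rfl
    have hc : (myNb 1).card = 2 := by decide
    norm_num [Finset.sum_singleton, h2, h5, hc]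
end

section
/- Let V be a finite set, let δ, ε ≥ 0, and let h : V → ℝ^d satisfy ‖h_v − h_w‖ > 2(δ + ε) for all v, w ∈ V with h_v ≠ h_w. Then for every λ > 0 there exists a function f : ℝ^d → ℝ^d such that: (i) for all v ∈ V and all x ∈ ℝ^d with ‖x − h_v‖ ≤ δ + ε, one has ‖f(x) − f(h_v)‖ ≤ δ + ε; and (ii) ‖f(h_v) − f(h_w)‖ > 2(δ + ε + λ) for all v, w ∈ V with h_v ≠ h_w. -/
/-- Lemma 2: if the exact embeddings `h v` are pairwise separated by more than
`2(δ + ε)`, then for every `λ > 0` there is a function `f` mapping every point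
within `δ + ε` of an exact embedding to within `δ + ε` of its image, while
keeping images of distinct exact embeddings separated by more than
`2(δ + ε + λ)`. -/
theorem exists_separating_layer_function
    {V : Type*} [Fintype V] (d : ℕ) (δ ε : ℝ) (hδ : 0 ≤ δ) (hε : 0 ≤ ε)
    (h : V → EuclideanSpace ℝ (Fin d))
    (hsep : ∀ v w : V, h v ≠ h w → 2 * (δ + ε) < ‖h v - h w‖) :
    ∀ lam : ℝ, 0 < lam →
      ∃ f : EuclideanSpace ℝ (Fin d) → EuclideanSpace ℝ (Fin d),
        (∀ v : V, ∀ x : EuclideanSpace ℝ (Fin d),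
          ‖x - h v‖ ≤ δ + ε → ‖f x - f (h v)‖ ≤ δ + ε) ∧
        (∀ v w : V, h v ≠ h w → 2 * (δ + ε + lam) < ‖f (h v) - f (h w)‖) := by
  intro lam hlam
  classical
  -- key: points within δ+ε of two embeddings force the embeddings equal
  have huniq : ∀ (x : EuclideanSpace ℝ (Fin d)) (v w : V),
      ‖x - h v‖ ≤ δ + ε → ‖x - h w‖ ≤ δ + ε → h v = h w := by
    intro x v w hv hw
    by_contra hne
    have h1 := hsep v w hne
    have h2 : ‖h v - h w‖ ≤ ‖x - h v‖ + ‖x - h w‖ := by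
      have := norm_sub_le (h v - x) (h w - x)
      simpa [norm_sub_rev, sub_sub_sub_cancel_right] using this
    linarith
  by_cases hS : ∃ p : V × V, h p.1 ≠ h p.2
  · -- minimum separation
    obtain ⟨p₀, hp₀⟩ := hS
    set S : Finset (V × V) := Finset.univ.filter (fun p => h p.1 ≠ h p.2) with hSdef
    have hSne : S.Nonempty := ⟨p₀, by simp [hSdef, hp₀]⟩
    set m : ℝ := S.inf' hSne (fun p => ‖h p.1 - h p.2‖) with hm
    have hmpos : 0 < m := by
      have h2 : 2 * (δ + ε) < m := by
        rw [hm]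
        apply lt_of_lt_of_le _ (le_refl _)
        rw [Finset.lt_inf'_iff]
        intro p hp
        exact hsep p.1 p.2 (by simpa [hSdef] using hp)
      nlinarith
    set c : ℝ := (2 * (δ + ε + lam) + 1) / m with hc
    have hcpos : 0 < c := by positivity
    set f : EuclideanSpace ℝ (Fin d) → EuclideanSpace ℝ (Fin d) :=
      fun x => if hx : ∃ v, ‖x - h v‖ ≤ δ + ε then c • h hx.choose else x with hf
    have hfval : ∀ (v : V) (x : EuclideanSpace ℝ (Fin d)),
        ‖x - h v‖ ≤ δ + ε → f x = c • h v := by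
      intro v x hx
      have hex : ∃ w, ‖x - h w‖ ≤ δ + ε := ⟨v, hx⟩
      have : h hex.choose = h v := huniq x _ v hex.choose_spec hx
      simp [hf, dif_pos hex, this]
    have hfh : ∀ v : V, f (h v) = c • h v := by
      intro v
      exact hfval v (h v) (by simp; positivity)
    refine ⟨f, ?_, ?_⟩
    · intro v x hx
      rw [hfval v x hx, hfh v]
      simp; positivity
    · intro v w hvw
      rw [hfh, hfh]
      have : ‖c • h v - c • h w‖ = c * ‖h v - h w‖ := by
        rw [← smul_sub, norm_smul, Real.norm_eq_abs, abs_of_pos hcpos]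
      rw [this]
      have hmem : (v, w) ∈ S := by simp [hSdef, hvw]
      have hmle : m ≤ ‖h v - h w‖ := Finset.inf'_le _ hmem
      have : c * m ≤ c * ‖h v - h w‖ := by
        exact mul_le_mul_of_nonneg_left hmle hcpos.le
      have hcm : c * m = 2 * (δ + ε + lam) + 1 := by
        rw [hc]; field_simp [hmpos.ne']
      linarith
  · -- no distinct embeddings: identity works, (ii) is vacuous
    refine ⟨id, ?_, ?_⟩
    · intro v x hx; simpa using hx
    · intro v w hvw
      exact absurd ⟨(v, w), hvw⟩ hS
end
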